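/- Fix real numbers D > 0 and λ₂ > 0, and define g : (0, ∞) → ℝ by g(M) = 1/√λ₂ if D² > 2Mλ₂, and g(M) = 2M√λ₂/(D·√(4Mλ₂ − D²)) if D² ≤ 2Mλ₂. Then g is convex on the interval (0, D²/λ₂] and concave on the interval [D²/λ₂, ∞). -/

import Mathlib

/-! With `ν(M) = max(D, √(4Mλ₂ − D²))`, both branches read `g = (ν + D²/ν)/(2D√λ₂)`, the constant
one being the value at `ν = D`. Away from the kink `2Mλ₂ = D²` this gives
`g' = (√λ₂/D)·φ(ν)` with `φ(s) = (s² − D²)/s³`, and since `φ(D) = 0` both sides agree at the kink,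
so `g` is C¹. As `φ'(s) = (3D² − s²)/s⁴`, `φ` increases up to `s = √3·D` and decreases after it;
`ν` is monotone in `M` and reaches `√3·D` exactly at `M = D²/λ₂`, so `g'` increases on
`(0, D²/λ₂]` and decreases on `[D²/λ₂, ∞)`. -/

/-- The H∞ norm of the swing dynamics with phase cohesiveness output, as a
function of the uniform inertia constant `M`:
`g(M) = 1/√λ₂` if `D² > 2Mλ₂`, and `g(M) = 2M√λ₂/(D√(4Mλ₂ − D²))` if
`D² ≤ 2Mλ₂`. -/
noncomputable def phaseHinfOfInertia (D lam2 M : ℝ) : ℝ :=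
  if D ^ 2 ≤ 2 * M * lam2 then
    2 * M * Real.sqrt lam2 / (D * Real.sqrt (4 * M * lam2 - D ^ 2))
  else 1 / Real.sqrt lam2

open Real Set Filter Topology

lemma monotoneOn_sq_sub_div_cube (c : ℝ) :
    MonotoneOn (fun s : ℝ => (s ^ 2 - c) / s ^ 3) (Ioc 0 √(3 * c)) := by
  rintro p ⟨hp, -⟩ q ⟨hq, hq3⟩ hpq
  have hq3 : q ^ 2 ≤ 3 * c := (Real.le_sqrt' hq).1 hq3
  rw [div_le_div_iff₀ (by positivity) (by positivity)]
  -- `(q² − c)p³ − (p² − c)q³ = (q − p)(c(p² + pq + q²) − p²q²)`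
  have hpq3 : p * q ≤ 3 * c := le_trans (by nlinarith) hq3
  have key : 0 ≤ c * (p ^ 2 + p * q + q ^ 2) - p ^ 2 * q ^ 2 := by
    nlinarith [mul_nonneg (mul_nonneg hp.le hq.le) (sub_nonneg.2 hpq3),
      mul_nonneg (mul_nonneg hp.le hq.le) (sq_nonneg (p - q))]
  nlinarith [mul_nonneg (sub_nonneg.2 hpq) key]

lemma antitoneOn_sq_sub_div_cube {c : ℝ} (hc : 0 < c) :
    AntitoneOn (fun s : ℝ => (s ^ 2 - c) / s ^ 3) (Ici √(3 * c)) := by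
  intro p hp q hq hpq
  have hp0 : 0 < p := lt_of_lt_of_le (by positivity) hp
  have hp3 : 3 * c ≤ p ^ 2 := (Real.sqrt_le_left hp0.le).1 hp
  have hq0 : 0 < q := hp0.trans_le hpq
  rw [div_le_div_iff₀ (by positivity) (by positivity)]
  have key : 0 ≤ p ^ 2 * q ^ 2 - c * (p ^ 2 + p * q + q ^ 2) := by
    nlinarith [mul_nonneg (sub_nonneg.2 hp3) (sq_nonneg q),
      mul_nonneg hc.le (mul_nonneg (sub_nonneg.2 hpq) (by positivity : (0:ℝ) ≤ 2 * q + p))]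
  nlinarith [mul_nonneg (sub_nonneg.2 hpq) key]

noncomputable def phaseHinfRoot (D lam2 M : ℝ) : ℝ := max D √(4 * M * lam2 - D ^ 2)

noncomputable def phaseHinfDeriv (D lam2 M : ℝ) : ℝ :=
  √lam2 / D * ((phaseHinfRoot D lam2 M ^ 2 - D ^ 2) / phaseHinfRoot D lam2 M ^ 3)

section

variable {D lam2 : ℝ}

lemma phaseHinfRoot_pos (hD : 0 < D) (M : ℝ) : 0 < phaseHinfRoot D lam2 M :=
  lt_max_of_lt_left hD

lemma continuous_phaseHinfRoot : Continuous (phaseHinfRoot D lam2) := by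
  unfold phaseHinfRoot; fun_prop

lemma monotone_phaseHinfRoot (hl : 0 ≤ lam2) : Monotone (phaseHinfRoot D lam2) :=
  fun _ _ h => max_le_max le_rfl (sqrt_le_sqrt (by nlinarith))

lemma phaseHinfRoot_eq_left {M : ℝ} (hD : 0 < D) (hM : 2 * M * lam2 ≤ D ^ 2) :
    phaseHinfRoot D lam2 M = D :=
  max_eq_left ((sqrt_le_left hD.le).2 (by linarith))

lemma phaseHinfRoot_eq_right {M : ℝ} (hD : 0 < D) (hM : D ^ 2 ≤ 2 * M * lam2) :
    phaseHinfRoot D lam2 M = √(4 * M * lam2 - D ^ 2) :=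
  max_eq_right ((Real.le_sqrt hD.le (by nlinarith)).2 (by linarith))

lemma phaseHinfOfInertia_eq_phaseHinfRoot (hD : 0 < D) (hl : 0 < lam2) (M : ℝ) :
    phaseHinfOfInertia D lam2 M =
      (phaseHinfRoot D lam2 M + D ^ 2 / phaseHinfRoot D lam2 M) / (2 * D * √lam2) := by
  have hsl : 0 < √lam2 := sqrt_pos.2 hl
  unfold phaseHinfOfInertia
  split_ifs with hM
  · rw [phaseHinfRoot_eq_right hD hM]
    have hs2 : √(4 * M * lam2 - D ^ 2) ^ 2 = 4 * M * lam2 - D ^ 2 := sq_sqrt (by nlinarith)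
    have hs : 0 < √(4 * M * lam2 - D ^ 2) := sqrt_pos.2 (by nlinarith)
    generalize √(4 * M * lam2 - D ^ 2) = s at hs hs2
    field_simp
    linear_combination 4 * M * sq_sqrt hl.le - hs2
  · rw [phaseHinfRoot_eq_left hD (by linarith)]
    field_simp
    ring

lemma hasDerivAt_phaseHinfOfInertia_of_lt (hD : 0 < D) {M : ℝ}
    (hM : 2 * M * lam2 < D ^ 2) :
    HasDerivAt (phaseHinfOfInertia D lam2) (phaseHinfDeriv D lam2 M) M := by
  have hconst : phaseHinfOfInertia D lam2 =ᶠ[𝓝 M] fun _ => 1 / √lam2 := by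
    filter_upwards [(isOpen_lt (f := fun y => 2 * y * lam2) (by fun_prop)
      continuous_const).mem_nhds hM] with y hy
    exact if_neg (not_le.2 hy)
  have hzero : phaseHinfDeriv D lam2 M = 0 := by
    simp [phaseHinfDeriv, phaseHinfRoot_eq_left hD hM.le]
  rw [hzero]
  exact (hasDerivAt_const M _).congr_of_eventuallyEq hconst

lemma hasDerivAt_phaseHinfOfInertia_of_gt (hD : 0 < D) (hl : 0 < lam2) {M : ℝ}
    (hM : D ^ 2 < 2 * M * lam2) :
    HasDerivAt (phaseHinfOfInertia D lam2) (phaseHinfDeriv D lam2 M) M := by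
  have hbranch : phaseHinfOfInertia D lam2 =ᶠ[𝓝 M] fun y =>
      (√(4 * y * lam2 - D ^ 2) + D ^ 2 / √(4 * y * lam2 - D ^ 2)) / (2 * D * √lam2) := by
    filter_upwards [(isOpen_lt (g := fun y => 2 * y * lam2) continuous_const
      (by fun_prop)).mem_nhds hM] with y hy
    rw [phaseHinfOfInertia_eq_phaseHinfRoot hD hl, phaseHinfRoot_eq_right hD hy.le]
  have hpos : 0 < 4 * M * lam2 - D ^ 2 := by nlinarith
  have hs := ((((hasDerivAt_id M).const_mul 4).mul_const lam2).sub_const (D ^ 2)).sqrt hpos.ne'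
  simp only [id, mul_one] at hs
  have hs0 : √(4 * M * lam2 - D ^ 2) ≠ 0 := (sqrt_pos.2 hpos).ne'
  refine HasDerivAt.congr_of_eventuallyEq ?_ hbranch
  refine ((hs.add ((hasDerivAt_const M (D ^ 2)).div hs hs0)).div_const
    (2 * D * √lam2)).congr_deriv ?_
  have hsl : 0 < √lam2 := sqrt_pos.2 hl
  unfold phaseHinfDeriv
  rw [phaseHinfRoot_eq_right hD hM.le]
  generalize √(4 * M * lam2 - D ^ 2) = s at hs0
  field_simp
  linear_combination (-4 * (s ^ 2 - D ^ 2)) * sq_sqrt hl.le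

lemma continuous_phaseHinfOfInertia (hD : 0 < D) (hl : 0 < lam2) :
    Continuous (phaseHinfOfInertia D lam2) := by
  rw [funext (phaseHinfOfInertia_eq_phaseHinfRoot hD hl)]
  exact (continuous_phaseHinfRoot.add (continuous_const.div continuous_phaseHinfRoot
    fun M => (phaseHinfRoot_pos hD M).ne')).div_const _

lemma continuous_phaseHinfDeriv (hD : 0 < D) : Continuous (phaseHinfDeriv D lam2) :=
  continuous_const.mul (((continuous_phaseHinfRoot.pow 2).sub continuous_const).div
    (continuous_phaseHinfRoot.pow 3) fun M => (pow_pos (phaseHinfRoot_pos hD M) 3).ne')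

lemma hasDerivAt_phaseHinfOfInertia (hD : 0 < D) (hl : 0 < lam2) (M : ℝ) :
    HasDerivAt (phaseHinfOfInertia D lam2) (phaseHinfDeriv D lam2 M) M := by
  rcases lt_trichotomy (2 * M * lam2) (D ^ 2) with hM | hM | hM
  · exact hasDerivAt_phaseHinfOfInertia_of_lt hD hM
  · refine hasDerivAt_of_hasDerivAt_of_ne (fun y hy => ?_)
      (continuous_phaseHinfOfInertia hD hl).continuousAt (continuous_phaseHinfDeriv hD).continuousAt
    have hy' : 2 * y * lam2 ≠ D ^ 2 := by
      rw [← hM]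
      exact fun h => hy (by simpa [hl.ne'] using h)
    rcases hy'.lt_or_gt with hy' | hy'
    · exact hasDerivAt_phaseHinfOfInertia_of_lt hD hy'
    · exact hasDerivAt_phaseHinfOfInertia_of_gt hD hl hy'
  · exact hasDerivAt_phaseHinfOfInertia_of_gt hD hl hM

lemma monotoneOn_phaseHinfDeriv (hD : 0 < D) (hl : 0 < lam2) :
    MonotoneOn (phaseHinfDeriv D lam2) (Ioc 0 (D ^ 2 / lam2)) := by
  have hmaps : MapsTo (phaseHinfRoot D lam2) (Ioc 0 (D ^ 2 / lam2)) (Ioc 0 √(3 * D ^ 2)) := by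
    intro M hM
    have hMl : M * lam2 ≤ D ^ 2 := (le_div_iff₀ hl).1 hM.2
    refine ⟨phaseHinfRoot_pos hD M, max_le ?_ (sqrt_le_sqrt (by linarith))⟩
    exact (Real.le_sqrt hD.le (by positivity)).2 (by nlinarith)
  intro x hx y hy hxy
  exact mul_le_mul_of_nonneg_left ((monotoneOn_sq_sub_div_cube _).comp
    ((monotone_phaseHinfRoot hl.le).monotoneOn _) hmaps hx hy hxy) (by positivity)

lemma antitoneOn_phaseHinfDeriv (hD : 0 < D) (hl : 0 < lam2) :
    AntitoneOn (phaseHinfDeriv D lam2) (Ici (D ^ 2 / lam2)) := by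
  have hmaps : MapsTo (phaseHinfRoot D lam2) (Ici (D ^ 2 / lam2)) (Ici √(3 * D ^ 2)) := by
    intro M hM
    have hMl : D ^ 2 ≤ M * lam2 := (div_le_iff₀ hl).1 hM
    exact (sqrt_le_sqrt (by linarith)).trans (le_max_right _ _)
  intro x hx y hy hxy
  exact mul_le_mul_of_nonneg_left ((antitoneOn_sq_sub_div_cube (by positivity)).comp_MonotoneOn
    ((monotone_phaseHinfRoot hl.le).monotoneOn _) hmaps hx hy hxy) (by positivity)

end

/-- For fixed `D > 0` and `λ₂ > 0`, the map `M ↦ g(M)` is convex on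
`(0, D²/λ₂]` and concave on `[D²/λ₂, ∞)`. -/
theorem phaseHinf_inertia_convexity (D lam2 : ℝ) (hD : 0 < D) (hl : 0 < lam2) :
    ConvexOn ℝ (Set.Ioc (0 : ℝ) (D ^ 2 / lam2)) (phaseHinfOfInertia D lam2) ∧
    ConcaveOn ℝ (Set.Ici (D ^ 2 / lam2)) (phaseHinfOfInertia D lam2) := by
  have hderiv := hasDerivAt_phaseHinfOfInertia hD hl
  have hdiff : Differentiable ℝ (phaseHinfOfInertia D lam2) :=
    fun M => (hderiv M).differentiableAt
  have hcont := hdiff.continuous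
  have hg' : deriv (phaseHinfOfInertia D lam2) = phaseHinfDeriv D lam2 :=
    funext fun M => (hderiv M).deriv
  refine ⟨MonotoneOn.convexOn_of_deriv (convex_Ioc _ _) hcont.continuousOn
    hdiff.differentiableOn ?_, AntitoneOn.concaveOn_of_deriv (convex_Ici _) hcont.continuousOn
    hdiff.differentiableOn ?_⟩ <;> rw [hg']
  · exact (monotoneOn_phaseHinfDeriv hD hl).mono interior_subset
  · exact (antitoneOn_phaseHinfDeriv hD hl).mono interior_subset
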